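/- With probability at least 1 − α, for every iteration t one has π̂_i^{(t)} ≥ π_i/(1+ε); consequently, on this event, if the algorithm terminates at condition (a) (i.e., π̂_i^{(t)} < Δ/(1+ε)) and outputs 0, then indeed π_i < Δ, and equivalently if π_i ≥ Δ the algorithm terminates at condition (b) and outputs 1. -/

import Mathlib

open MeasureTheory ProbabilityTheory Finset Set
open scoped ENNReal NNReal Classical

namespace LocalStationary

noncomputable section

/-- First return time (≥ 1) of a trajectory `f` to the state `i`, valued in `ℕ∞`
(it equals `⊤` if the trajectory never returns to `i`). -/
def hit {S : Type*} (i : S) (f : ℕ → S) : ℕ∞ :=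
  sInf {n : ℕ∞ | ∃ m : ℕ, n = m ∧ 1 ≤ m ∧ f m = i}

/-- Truncated return time `min(T_i, θ)` as a natural number. -/
def truncHit {S : Type*} (i : S) (θ : ℕ) (f : ℕ → S) : ℕ :=
  (min (hit i f) (θ : ℕ∞)).toNat

/-- Number of visits to `j` among the first `min(T_i, θ)` steps of the trajectory. -/
def visits {S : Type*} (i j : S) (θ : ℕ) (f : ℕ → S) : ℕ :=
  ((Finset.Icc 1 (truncHit i θ f)).filter fun s => f s = j).card

/-- A discrete-time time-homogeneous Markov chain on a state space `S`, described by
the laws `μ x` of its trajectories started at each state `x`, together with its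
transition matrix `trans`. -/
structure Chain (S : Type*) [MeasurableSpace S] where
  μ : S → Measure (ℕ → S)
  isProb : ∀ x, IsProbabilityMeasure (μ x)
  start : ∀ x, μ x {f | f 0 = x} = 1
  trans : S → S → ℝ≥0∞
  trans_sum : ∀ x, ∑' y, trans x y = 1
  markov : ∀ x (n : ℕ) (s : ℕ → S),
    μ x {f | ∀ k ≤ n + 1, f k = s k} =
      μ x {f | ∀ k ≤ n, f k = s k} * trans (s n) (s (n + 1))

namespace Chain

variable {S : Type*} [MeasurableSpace S]

/-- Irreducibility: from every state one can reach every other state. -/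
def Irreducible (C : Chain S) : Prop :=
  ∀ x y : S, ∃ n : ℕ, 0 < C.μ x {f | f n = y}

/-- Positive recurrence: the return time to each state is almost surely finite and
has finite expectation. -/
def PositiveRecurrent (C : Chain S) : Prop :=
  ∀ x : S, C.μ x {f | hit x f = ⊤} = 0 ∧
    Integrable (fun f => ((hit x f).toNat : ℝ)) (C.μ x)

/-- Aperiodicity: for each state, the only common divisor of the possible return
times is `1`. -/
def Aperiodic (C : Chain S) : Prop :=
  ∀ x : S, ∀ d : ℕ, (∀ n : ℕ, 1 ≤ n → 0 < C.μ x {f | f n = x} → d ∣ n) → d ∣ 1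

/-- `E_x[T_i]`, the expected hitting time of `i` starting from `x`. -/
def ERet (C : Chain S) (x i : S) : ℝ :=
  ∫ f, ((hit i f).toNat : ℝ) ∂ C.μ x

/-- The stationary probability `π_i = 1 / E_i[T_i]`. -/
def statPi (C : Chain S) (i : S) : ℝ := (C.ERet i i)⁻¹

/-- The truncated mean `E_i[min(T_i, θ)]`. -/
def EThat (C : Chain S) (i : S) (θ : ℕ) : ℝ :=
  ∫ f, (truncHit i θ f : ℝ) ∂ C.μ i

/-- `E_i[F̂_j] = E_i[Σ_{s=1}^{min(T_i,θ)} 1{X_s = j}]`. -/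
def EVisits (C : Chain S) (i j : S) (θ : ℕ) : ℝ :=
  ∫ f, (visits i j θ f : ℝ) ∂ C.μ i

/-- `P_i(T_i > k)`, as a real number. -/
def tailP (C : Chain S) (i : S) (k : ℕ) : ℝ :=
  (C.μ i {f | (k : ℕ∞) < hit i f}).toReal

/-- The maximal hitting time `H_i = max_x E_x[T_i]`. -/
def maxHit (C : Chain S) (i : S) : ℝ := ⨆ x : S, C.ERet x i

/-- Entry `Z_{jk} = Σ_{t=0}^∞ (P^{(t)}_{jk} − π_k)` of the fundamental matrix. -/
def Zfun (C : Chain S) (j k : S) : ℝ :=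
  ∑' t : ℕ, ((C.μ j {f | f t = k}).toReal - C.statPi k)

/-- `Z_max(i) = max_k |Z_{ki}|`. -/
def Zmax (C : Chain S) (i : S) : ℝ := ⨆ k : S, |C.Zfun k i|

end Chain


/-- The randomness of the local algorithm with anchor node `i` and parameters `ε`, `α`,
run on the chain `C`: a probability space carrying, for every iteration `t` and sample
index `k`, an independent sample trajectory `path t k` of the chain started at `i`,
together with the sample numbers `N^{(t)}`, empirical truncated return times `T̂^{(t)}`
and truncated fractions `p̂^{(t)}`, with `θ^{(t)} = 2^t`. -/
structure Algo {S : Type*} [MeasurableSpace S] (C : Chain S) (i : S) (ε α : ℝ)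
    (Ω : Type*) [MeasurableSpace Ω] where
  vol : Measure Ω
  isProb : IsProbabilityMeasure vol
  path : ℕ → ℕ → Ω → (ℕ → S)
  meas_path : ∀ t k, Measurable (path t k)
  law_path : ∀ t k, vol.map (path t k) = C.μ i
  indep_path : iIndepFun (fun p : ℕ × ℕ => path p.1 p.2) vol
  Nsamp : ℕ → Ω → ℕ
  That : ℕ → Ω → ℝ
  phat : ℕ → Ω → ℝ
  hThat : ∀ t ω, That t ω =
    (Nsamp t ω : ℝ)⁻¹ * ∑ k ∈ Finset.range (Nsamp t ω), (truncHit i (2 ^ t) (path t k ω) : ℝ)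
  hphat : ∀ t ω, phat t ω = (Nsamp t ω : ℝ)⁻¹ *
    ∑ k ∈ Finset.range (Nsamp t ω),
      (if ((2 ^ t : ℕ) : ℕ∞) < hit i (path t k ω) then (1 : ℝ) else 0)
  hN1 : ∀ ω, Nsamp 1 ω = ⌈6 * (1 + ε) * Real.log (8 / α) / ε ^ 2⌉₊
  hNsucc : ∀ t ω, 1 ≤ t → Nsamp (t + 1) ω =
    ⌈3 * (1 + ε) * (2 ^ (t + 1) : ℝ) * Real.log (4 * (2 ^ (t + 1) : ℝ) / α) /
      (That t ω * ε ^ 2)⌉₊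

namespace Algo

variable {S : Type*} [MeasurableSpace S] {C : Chain S} {i : S} {ε α : ℝ}
  {Ω : Type*} [MeasurableSpace Ω]

/-- The estimate `F̂_j^{(t)}` of the visit frequency to an observer node `j`. -/
def Fhat (A : Algo C i ε α Ω) (j : S) (t : ℕ) (ω : Ω) : ℝ :=
  (A.Nsamp t ω : ℝ)⁻¹ *
    ∑ k ∈ Finset.range (A.Nsamp t ω), (visits i j (2 ^ t) (A.path t k ω) : ℝ)

/-- Termination condition at iteration `t`: (a) `π̂^{(t)} < Δ/(1+ε)`, or
(b) `p̂^{(t)} π̂^{(t)} < εΔ`, where `π̂^{(t)} = 1/T̂^{(t)}`. -/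
def stops (A : Algo C i ε α Ω) (Δ : ℝ) (t : ℕ) (ω : Ω) : Prop :=
  (A.That t ω)⁻¹ < Δ / (1 + ε) ∨ A.phat t ω * (A.That t ω)⁻¹ < ε * Δ

/-- The terminal iteration `t_max` of the algorithm. -/
def tmax (A : Algo C i ε α Ω) (Δ : ℝ) (ω : Ω) : ℕ :=
  sInf {t : ℕ | 1 ≤ t ∧ A.stops Δ t ω}

end Algo

/-!
Every sample `min(T_i, θ)` lies in `[0, θ]` and has mean at most `E_i[T_i] = 1/π_i ≥ 1`, so by
a multiplicative Chernoff bound the mean of `N` independent samples exceeds `(1 + ε) E_i[T_i]`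
with probability at most `exp (-ε² E_i[T_i] N / (3θ))`. The sample sizes are chosen so that
this is at most `α/8` in the first iteration, and at most `α/2^(t+3)` in iteration `t + 1` as
long as `T̂^{(t)} ≤ (1 + ε) E_i[T_i]`; since iteration `t + 1` draws fresh paths, independent
of the random size `N^{(t+1)}`, the bound survives conditioning on it. A union bound over the
first bad iteration shows that with probability at least `1 - α/4` every `T̂^{(t)}` stays below
`(1 + ε) E_i[T_i]`, i.e. `π̂^{(t)} ≥ π_i/(1 + ε)`, and the rest is arithmetic.
-/

section Chernoff

open Real

variable {Ω ι : Type*} {mΩ : MeasurableSpace Ω} {μ : Measure Ω}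

theorem add_sq_div_three_le_mul_log {ε : ℝ} (hε0 : 0 ≤ ε) (hε1 : ε ≤ 1) :
    ε + ε ^ 2 / 3 ≤ (1 + ε) * log (1 + ε) :=
  calc ε + ε ^ 2 / 3 ≤ (1 + ε) * (2 * ε / (ε + 2)) := by
        rw [mul_div_assoc', le_div_iff₀ (by linarith)]
        nlinarith [mul_nonneg (sq_nonneg ε) (sub_nonneg.2 hε1)]
    _ ≤ (1 + ε) * log (1 + ε) := by gcongr; exact le_log_one_add_of_nonneg hε0

/-- The convexity bound `exp (t y) ≤ 1 + (y / θ) (exp (t θ) - 1)` on `[0, θ]`, integrated. -/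
theorem mgf_le_exp_of_mem_Icc [IsProbabilityMeasure μ] {Y : Ω → ℝ} (hY : Measurable Y)
    {θ : ℝ} (hθ : 0 < θ) (hbd : ∀ ω, Y ω ∈ Icc 0 θ) (t : ℝ) :
    mgf Y μ t ≤ exp (μ[Y] / θ * (exp (t * θ) - 1)) := by
  have hconv : ∀ ω, exp (t * Y ω) ≤ 1 + Y ω / θ * (exp (t * θ) - 1) := fun ω => by
    obtain ⟨h0, hθY⟩ := hbd ω
    have h := convexOn_exp.2 (mem_univ 0) (mem_univ (t * θ))
      (sub_nonneg.2 ((div_le_one hθ).2 hθY)) (div_nonneg h0 hθ.le) (sub_add_cancel 1 (Y ω / θ))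
    simp only [smul_eq_mul, mul_zero, zero_add, exp_zero, mul_one] at h
    rw [show Y ω / θ * (t * θ) = t * Y ω by field_simp] at h
    linarith
  have hint : Integrable Y μ := .of_mem_Icc 0 θ hY.aemeasurable (ae_of_all _ hbd)
  calc mgf Y μ t ≤ ∫ ω, 1 + Y ω / θ * (exp (t * θ) - 1) ∂μ :=
        integral_mono_of_nonneg (ae_of_all _ fun ω => (exp_pos _).le)
          ((integrable_const 1).add ((hint.div_const θ).mul_const _)) (ae_of_all _ hconv)
    _ = μ[Y] / θ * (exp (t * θ) - 1) + 1 := by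
        rw [integral_add (integrable_const 1) ((hint.div_const θ).mul_const _),
          integral_mul_const, integral_div]
        simp [add_comm]
    _ ≤ exp (μ[Y] / θ * (exp (t * θ) - 1)) := add_one_le_exp _

/-- Multiplicative Chernoff bound for independent random variables with values in `[0, θ]`. -/
theorem measureReal_le_sum_le_exp_of_mem_Icc {Y : ι → Ω → ℝ} (hind : iIndepFun Y μ)
    (hmeas : ∀ k, Measurable (Y k)) {θ m ε : ℝ} (hθ : 0 < θ) (hbd : ∀ k ω, Y k ω ∈ Icc 0 θ)
    (hm : 0 ≤ m) (hmean : ∀ k, μ[Y k] ≤ m) (hε0 : 0 < ε) (hε1 : ε ≤ 1) (s : Finset ι) :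
    μ.real {ω | (1 + ε) * m * #s ≤ ∑ k ∈ s, Y k ω} ≤ exp (-(ε ^ 2 / 3) * (m / θ) * #s) := by
  have := hind.isProbabilityMeasure
  set t := log (1 + ε) / θ
  have ht : 0 ≤ t := div_nonneg (log_nonneg (by linarith)) hθ.le
  have hexp : exp (t * θ) = 1 + ε := by
    rw [div_mul_cancel₀ _ hθ.ne', exp_log (by linarith)]
  have hmgf : ∀ k, mgf (Y k) μ t ≤ exp (m / θ * ε) := fun k =>
    (mgf_le_exp_of_mem_Icc (hmeas k) hθ (hbd k) t).trans <| by
      rw [hexp, add_sub_cancel_left]; gcongr; exact hmean k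
  have hint : Integrable (fun ω => exp (t * (∑ k ∈ s, Y k) ω)) μ :=
    hind.integrable_exp_mul_sum hmeas fun k _ =>
      integrable_exp_mul_of_mem_Icc (hmeas k).aemeasurable (ae_of_all _ (hbd k))
  have hlog := add_sq_div_three_le_mul_log hε0.le hε1
  calc μ.real {ω | (1 + ε) * m * #s ≤ ∑ k ∈ s, Y k ω}
      = μ.real {ω | (1 + ε) * m * #s ≤ (∑ k ∈ s, Y k) ω} := by simp only [Finset.sum_apply]
    _ ≤ exp (-t * ((1 + ε) * m * #s)) * mgf (∑ k ∈ s, Y k) μ t :=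
        measure_ge_le_exp_mul_mgf _ ht hint
    _ ≤ exp (-t * ((1 + ε) * m * #s)) * exp (m / θ * ε) ^ #s := by
        rw [hind.mgf_sum hmeas, ← Finset.prod_const]
        gcongr with k
        exacts [fun k _ => mgf_nonneg, hmgf k]
    _ = exp (m * #s / θ * (ε - (1 + ε) * log (1 + ε))) := by
        rw [← exp_nat_mul, ← exp_add]; congr 1; simp only [t]; field_simp; ring
    _ ≤ exp (-(ε ^ 2 / 3) * (m / θ) * #s) := by
        rw [exp_le_exp, show -(ε ^ 2 / 3) * (m / θ) * #s = m * #s / θ * -(ε ^ 2 / 3) by ring]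
        gcongr
        linarith

end Chernoff

theorem measure_mem_and_mem_le_of_indep {Ω : Type*} {m₁ m₂ mΩ : MeasurableSpace Ω}
    {μ : Measure Ω} (hm₁ : m₁ ≤ mΩ) (hind : Indep m₁ m₂ μ) {N : Ω → ℕ} (hN : Measurable[m₁] N)
    {E : Set Ω} (hE : MeasurableSet[m₁] E) {B : ℕ → Set Ω} (hB : ∀ n, MeasurableSet[m₂] (B n))
    {δ : ℝ≥0∞} (hδ : ∀ ω ∈ E, μ (B (N ω)) ≤ δ) :
    μ {ω | ω ∈ E ∧ ω ∈ B (N ω)} ≤ μ E * δ := by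
  have hfib : ∀ n, MeasurableSet[m₁] (E ∩ N ⁻¹' {n}) := fun n =>
    hE.inter (hN (measurableSet_singleton n))
  have hdisj : Pairwise (Function.onFun Disjoint fun n => E ∩ N ⁻¹' {n}) := fun a b hab =>
    ((Set.disjoint_singleton.2 hab).preimage N).mono inter_subset_right inter_subset_right
  calc μ {ω | ω ∈ E ∧ ω ∈ B (N ω)} = μ (⋃ n, E ∩ N ⁻¹' {n} ∩ B n) := by
        congr 1; ext ω; simp
    _ ≤ ∑' n, μ (E ∩ N ⁻¹' {n} ∩ B n) := measure_iUnion_le _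
    _ = ∑' n, μ (E ∩ N ⁻¹' {n}) * μ (B n) := by
        congr 1 with n; exact (Indep_iff _ _ μ).1 hind _ _ (hfib n) (hB n)
    _ ≤ ∑' n, μ (E ∩ N ⁻¹' {n}) * δ := ENNReal.tsum_le_tsum fun n => by
        rcases (E ∩ N ⁻¹' {n}).eq_empty_or_nonempty with h | ⟨ω, hωE, hωn⟩
        · simp [h]
        · rw [Set.mem_preimage, Set.mem_singleton_iff] at hωn
          exact mul_le_mul_right (hωn ▸ hδ ω hωE) _
    _ = μ E * δ := by
        rw [ENNReal.tsum_mul_right, ← measure_iUnion hdisj fun n => hm₁ _ (hfib n)]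
        congr 2; ext ω; simp

theorem mul_natCast_le_of_lt_inv_mul {c s : ℝ} {n : ℕ} (hs : 0 ≤ s) (h : c < (n : ℝ)⁻¹ * s) :
    c * n ≤ s := by
  rcases n.eq_zero_or_pos with rfl | hn
  · simpa using hs
  · rw [inv_mul_eq_div, lt_div_iff₀ (by exact_mod_cast hn)] at h
    exact h.le

section ReturnTime

variable {S : Type*} {i : S} {θ : ℕ} {f g : ℕ → S}

theorem one_le_hit : 1 ≤ hit i f :=
  le_sInf fun _ ⟨m, hn, hm, _⟩ => hn ▸ by exact_mod_cast hm

theorem min_hit_le_hit_of_eqOn (h : ∀ k ≤ θ, f k = g k) : min (hit i f) θ ≤ hit i g :=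
  le_sInf fun _ ⟨m, hn, hm, hgm⟩ => hn ▸ by
    by_cases hmθ : m ≤ θ
    · exact min_le_of_left_le (sInf_le ⟨m, rfl, hm, (h m hmθ).trans hgm⟩)
    · exact min_le_of_right_le (by exact_mod_cast (not_le.1 hmθ).le)

theorem truncHit_congr (h : ∀ k ≤ θ, f k = g k) : truncHit i θ f = truncHit i θ g :=
  congrArg ENat.toNat <| le_antisymm
    (le_min (min_hit_le_hit_of_eqOn h) (min_le_right _ _))
    (le_min (min_hit_le_hit_of_eqOn fun k hk => (h k hk).symm) (min_le_right _ _))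

theorem truncHit_le : truncHit i θ f ≤ θ :=
  ENat.toNat_le_of_le_natCast (min_le_right _ _)

theorem one_le_truncHit (hθ : 1 ≤ θ) : 1 ≤ truncHit i θ f := by
  have h : (1 : ℕ∞) ≤ min (hit i f) θ := le_min one_le_hit (by exact_mod_cast hθ)
  have hne : min (hit i f) θ ≠ ⊤ := (min_le_right _ _).trans_lt (ENat.natCast_lt_top θ) |>.ne
  simpa [truncHit] using ENat.toNat_le_toNat h hne

theorem truncHit_le_toNat_hit (h : hit i f ≠ ⊤) : truncHit i θ f ≤ (hit i f).toNat :=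
  ENat.toNat_le_toNat (min_le_left _ _) h

theorem measurable_truncHit [MeasurableSpace S] [MeasurableSingletonClass S] [Countable S] :
    Measurable (truncHit i θ) := by
  have hfac : truncHit i θ = (fun v : Fin (θ + 1) → S =>
      truncHit i θ fun n => if h : n < θ + 1 then v ⟨n, h⟩ else i) ∘
      fun f (k : Fin (θ + 1)) => f k := by
    funext f
    exact truncHit_congr fun k hk => by simp [Nat.lt_succ_of_le hk]
  rw [hfac]
  exact (measurable_of_countable _).comp (measurable_pi_lambda _ fun k => measurable_pi_apply _)

end ReturnTime

namespace Chain

variable {S : Type*} [MeasurableSpace S] (C : Chain S) {i : S}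

instance (x : S) : IsProbabilityMeasure (C.μ x) := C.isProb x

variable [MeasurableSingletonClass S] [Countable S]

theorem integrable_truncHit (x : S) (θ : ℕ) :
    Integrable (fun f => (truncHit i θ f : ℝ)) (C.μ x) :=
  .of_mem_Icc 0 θ (measurable_from_nat.comp measurable_truncHit).aemeasurable <|
    ae_of_all _ fun _ => ⟨Nat.cast_nonneg _, Nat.cast_le.2 truncHit_le⟩

theorem one_le_EThat {θ : ℕ} (hθ : 1 ≤ θ) : 1 ≤ C.EThat i θ := by
  calc (1 : ℝ) = ∫ _, (1 : ℝ) ∂C.μ i := by simp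
    _ ≤ C.EThat i θ := integral_mono (integrable_const 1) (C.integrable_truncHit i θ)
        fun f => Nat.one_le_cast.2 (one_le_truncHit hθ)

theorem EThat_le_ERet (hrec : C.PositiveRecurrent) (θ : ℕ) : C.EThat i θ ≤ C.ERet i i := by
  have hfin : ∀ᵐ f ∂C.μ i, hit i f ≠ ⊤ := measure_eq_zero_iff_ae_notMem.1 (hrec i).1
  exact integral_mono_ae (C.integrable_truncHit i θ) (hrec i).2 <|
    hfin.mono fun f hf => Nat.cast_le.2 (truncHit_le_toNat_hit hf)

theorem one_le_ERet (hrec : C.PositiveRecurrent) : 1 ≤ C.ERet i i :=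
  (C.one_le_EThat le_rfl).trans (C.EThat_le_ERet hrec 1)

end Chain

namespace Algo

open Real

variable {S : Type*} [MeasurableSpace S] {C : Chain S} {i : S} {ε α : ℝ}
  {Ω : Type*} [mΩ : MeasurableSpace Ω] (A : Algo C i ε α Ω)

instance : IsProbabilityMeasure A.vol := A.isProb

abbrev pathsSigma (T : Set (ℕ × ℕ)) : MeasurableSpace Ω :=
  ⨆ q ∈ T, MeasurableSpace.comap (A.path q.1 q.2) inferInstance

theorem pathsSigma_le (T : Set (ℕ × ℕ)) : A.pathsSigma T ≤ mΩ :=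
  iSup₂_le fun q _ => (A.meas_path q.1 q.2).comap_le

theorem measurable_path_pathsSigma {T : Set (ℕ × ℕ)} {t k : ℕ} (h : (t, k) ∈ T) :
    Measurable[A.pathsSigma T] (A.path t k) :=
  Measurable.of_comap_le <| le_iSup₂
    (f := fun (q : ℕ × ℕ) (_ : q ∈ T) => MeasurableSpace.comap (A.path q.1 q.2) inferInstance)
    (t, k) h

theorem indep_pathsSigma {T T' : Set (ℕ × ℕ)} (h : Disjoint T T') :
    Indep (A.pathsSigma T) (A.pathsSigma T') A.vol := by
  have hind := indep_iSup_of_disjoint (fun q => (A.meas_path q.1 q.2).comap_le)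
    ((iIndepFun_iff_iIndep _ _ _).1 A.indep_path) h
  exact hind

def sampleSum (t n : ℕ) (ω : Ω) : ℝ :=
  ∑ k ∈ range n, (truncHit i (2 ^ t) (A.path t k ω) : ℝ)

theorem That_eq_sampleSum (t : ℕ) (ω : Ω) :
    A.That t ω = (A.Nsamp t ω : ℝ)⁻¹ * A.sampleSum t (A.Nsamp t ω) ω :=
  A.hThat t ω

theorem measurable_Nsamp_succ {T : Set (ℕ × ℕ)} {t : ℕ} (ht : 1 ≤ t)
    (hT : Measurable[A.pathsSigma T] (A.That t)) :
    Measurable[A.pathsSigma T] (A.Nsamp (t + 1)) := by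
  rw [funext fun ω => A.hNsucc t ω ht]
  exact Nat.measurable_ceil.comp (measurable_const.div (hT.mul_const _))

theorem mul_Nsamp_le_sampleSum_of_lt_That {c : ℝ} {t : ℕ} {ω : Ω} (h : c < A.That t ω) :
    c * A.Nsamp t ω ≤ A.sampleSum t (A.Nsamp t ω) ω :=
  mul_natCast_le_of_lt_inv_mul (sum_nonneg fun _ _ => Nat.cast_nonneg _)
    (A.That_eq_sampleSum t ω ▸ h)

theorem one_le_That_of_one_le_Nsamp {t : ℕ} {ω : Ω} (h : 1 ≤ A.Nsamp t ω) : 1 ≤ A.That t ω := by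
  have hn : (0 : ℝ) < A.Nsamp t ω := by exact_mod_cast h
  rw [That_eq_sampleSum, inv_mul_eq_div, le_div_iff₀ hn, one_mul]
  calc (A.Nsamp t ω : ℝ) = ∑ _k ∈ range (A.Nsamp t ω), (1 : ℝ) := by simp
    _ ≤ A.sampleSum t (A.Nsamp t ω) ω :=
        sum_le_sum fun _ _ => Nat.one_le_cast.2 (one_le_truncHit Nat.one_le_two_pow)

theorem one_le_That (hε : 0 < ε) (hα0 : 0 < α) (hα1 : α < 1) {t : ℕ} (ht : 1 ≤ t) (ω : Ω) :
    1 ≤ A.That t ω := by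
  induction t, ht using Nat.le_induction with
  | base =>
    refine A.one_le_That_of_one_le_Nsamp ?_
    have := log_pos (show 1 < 8 / α by rw [lt_div_iff₀ hα0]; linarith)
    rw [A.hN1, Nat.one_le_iff_ne_zero, ← Nat.pos_iff_ne_zero, Nat.ceil_pos]
    positivity
  | succ t ht ih =>
    refine A.one_le_That_of_one_le_Nsamp ?_
    have := log_pos (show 1 < 4 * (2 : ℝ) ^ (t + 1) / α by
      rw [lt_div_iff₀ hα0]; nlinarith [one_le_pow₀ (n := t + 1) (one_le_two (α := ℝ))])
    have : 0 < A.That t ω := by linarith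
    rw [A.hNsucc t ω ht, Nat.one_le_iff_ne_zero, ← Nat.pos_iff_ne_zero, Nat.ceil_pos]
    positivity

variable [MeasurableSingletonClass S] [Countable S]

theorem measurable_sampleSum {T : Set (ℕ × ℕ)} {t : ℕ} (hT : ∀ k, (t, k) ∈ T) (n : ℕ) :
    Measurable[A.pathsSigma T] (A.sampleSum t n) :=
  Finset.measurable_sum _ fun k _ =>
    measurable_from_nat.comp (measurable_truncHit.comp (A.measurable_path_pathsSigma (hT k)))

theorem measurable_That {T : Set (ℕ × ℕ)} {t : ℕ} (hT : ∀ k, (t, k) ∈ T)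
    (hN : Measurable[A.pathsSigma T] (A.Nsamp t)) : Measurable[A.pathsSigma T] (A.That t) := by
  have hF : Measurable[(A.pathsSigma T).prod _]
      fun p : Ω × ℕ => (p.2 : ℝ)⁻¹ * A.sampleSum t p.2 p.1 :=
    measurable_from_prod_countable_left fun n => by
      simpa using (A.measurable_sampleSum hT n).const_mul ((n : ℝ)⁻¹)
  rw [funext (A.That_eq_sampleSum t)]
  exact hF.comp (measurable_id.prodMk hN)

theorem measurable_That_of_le {t s : ℕ} (hs : 1 ≤ s) (hst : s ≤ t) :
    Measurable[A.pathsSigma {q | q.1 ≤ t}] (A.That s) := by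
  induction s, hs using Nat.le_induction with
  | base =>
    refine A.measurable_That (fun k => hst) ?_
    rw [funext A.hN1]
    exact measurable_const
  | succ s hs ih =>
    exact A.measurable_That (fun k => hst) (A.measurable_Nsamp_succ hs (ih (by omega)))

theorem measure_le_sampleSum_le (hrec : C.PositiveRecurrent) (hε0 : 0 < ε) (hε1 : ε ≤ 1)
    (t n : ℕ) {L : ℝ} (hL : 3 * 2 ^ t * L ≤ ε ^ 2 * C.ERet i i * n) :
    A.vol {ω | (1 + ε) * C.ERet i i * n ≤ A.sampleSum t n ω} ≤ ENNReal.ofReal (exp (-L)) := by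
  set Y : ℕ → Ω → ℝ := fun k ω => truncHit i (2 ^ t) (A.path t k ω)
  have hX : Measurable fun f => (truncHit i (2 ^ t) f : ℝ) :=
    measurable_from_nat.comp measurable_truncHit
  have hmeas : ∀ k, Measurable (Y k) := fun k => hX.comp (A.meas_path t k)
  have hind : iIndepFun Y A.vol :=
    (A.indep_path.precomp (g := fun k => (t, k)) fun _ _ h => (Prod.ext_iff.1 h).2).comp _
      fun _ => hX
  have hmean : ∀ k, A.vol[Y k] ≤ C.ERet i i := fun k =>
    calc A.vol[Y k] = C.EThat i (2 ^ t) := by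
          rw [Chain.EThat, ← A.law_path t k,
            integral_map (A.meas_path t k).aemeasurable hX.aestronglyMeasurable]
      _ ≤ C.ERet i i := C.EThat_le_ERet hrec _
  have hm := C.one_le_ERet hrec (i := i)
  have h := measureReal_le_sum_le_exp_of_mem_Icc hind hmeas (θ := (2 : ℝ) ^ t) (by positivity)
    (fun _ _ => ⟨Nat.cast_nonneg _, by simp only [Y]; exact_mod_cast truncHit_le⟩)
    (by linarith) hmean hε0 hε1 (range n)
  rw [card_range] at h
  have hexp : -(ε ^ 2 / 3) * (C.ERet i i / 2 ^ t) * n ≤ -L := by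
    rw [show -(ε ^ 2 / 3) * (C.ERet i i / 2 ^ t) * n = -(ε ^ 2 * C.ERet i i * n / (3 * 2 ^ t))
      by ring, neg_le_neg_iff, le_div_iff₀ (by positivity)]
    linarith
  rw [← ofReal_measureReal]
  exact ENNReal.ofReal_le_ofReal (h.trans (exp_le_exp.2 hexp))

theorem measure_That_one_gt_le (hrec : C.PositiveRecurrent) (hε0 : 0 < ε) (hε1 : ε ≤ 1)
    (hα0 : 0 < α) (hα1 : α < 1) :
    A.vol {ω | (1 + ε) * C.ERet i i < A.That 1 ω} ≤ ENNReal.ofReal (α / 8) := by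
  set n := ⌈6 * (1 + ε) * log (8 / α) / ε ^ 2⌉₊
  have hL : 0 < log (8 / α) := log_pos (by rw [lt_div_iff₀ hα0]; linarith)
  have hm := C.one_le_ERet hrec (i := i)
  have hn : 6 * (1 + ε) * log (8 / α) ≤ n * ε ^ 2 :=
    (div_le_iff₀ (by positivity)).1 (Nat.le_ceil _)
  calc A.vol {ω | (1 + ε) * C.ERet i i < A.That 1 ω}
      ≤ A.vol {ω | (1 + ε) * C.ERet i i * n ≤ A.sampleSum 1 n ω} := measure_mono fun ω hω => by
        simpa [n, A.hN1] using A.mul_Nsamp_le_sampleSum_of_lt_That hω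
    _ ≤ ENNReal.ofReal (exp (-log (8 / α))) := A.measure_le_sampleSum_le hrec hε0 hε1 1 n <| by
        nlinarith [mul_nonneg (mul_nonneg (sq_nonneg ε) (Nat.cast_nonneg n)) (sub_nonneg.2 hm)]
    _ = ENNReal.ofReal (α / 8) := by rw [exp_neg, exp_log (by positivity), inv_div]

theorem measure_That_le_and_succ_gt_le (hrec : C.PositiveRecurrent) (hε0 : 0 < ε)
    (hε1 : ε ≤ 1) (hα0 : 0 < α) (hα1 : α < 1) {t : ℕ} (ht : 1 ≤ t) :
    A.vol {ω | A.That t ω ≤ (1 + ε) * C.ERet i i ∧ (1 + ε) * C.ERet i i < A.That (t + 1) ω}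
      ≤ ENNReal.ofReal (α / 2 ^ (t + 3)) := by
  set c := (1 + ε) * C.ERet i i
  set L := log (4 * 2 ^ (t + 1) / α)
  have hm := C.one_le_ERet hrec (i := i)
  have hθ : (1 : ℝ) ≤ 2 ^ (t + 1) := one_le_pow₀ one_le_two
  have hL : 0 < L := log_pos (by rw [lt_div_iff₀ hα0]; nlinarith)
  have hdisj : Disjoint {q : ℕ × ℕ | q.1 ≤ t} {q | q.1 = t + 1} :=
    Set.disjoint_left.2 fun q h1 h2 => by simp only [mem_ofPred_eq] at h1 h2; omega
  have hThat := A.measurable_That_of_le ht le_rfl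
  have hbound : ∀ ω ∈ {ω | A.That t ω ≤ c},
      A.vol {ω' | c * A.Nsamp (t + 1) ω ≤ A.sampleSum (t + 1) (A.Nsamp (t + 1) ω) ω'}
        ≤ ENNReal.ofReal (α / 2 ^ (t + 3)) := fun ω hω => by
    have hT := A.one_le_That hε0 hα0 hα1 ht ω
    have hN : 3 * (1 + ε) * 2 ^ (t + 1) * L ≤ A.Nsamp (t + 1) ω * (A.That t ω * ε ^ 2) := by
      rw [A.hNsucc t ω ht]
      exact (div_le_iff₀ (by positivity)).1 (Nat.le_ceil _)
    calc _ ≤ ENNReal.ofReal (exp (-L)) := A.measure_le_sampleSum_le hrec hε0 hε1 _ _ <| by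
          simp only [mem_ofPred_eq, c] at hω
          nlinarith [mul_le_mul_of_nonneg_left hω
            (mul_nonneg (Nat.cast_nonneg (A.Nsamp (t + 1) ω)) (sq_nonneg ε))]
      _ = ENNReal.ofReal (α / 2 ^ (t + 3)) := by
          rw [exp_neg, exp_log (by positivity), inv_div]
          congr 1; ring
  calc A.vol {ω | A.That t ω ≤ c ∧ c < A.That (t + 1) ω}
      ≤ A.vol {ω | ω ∈ {ω | A.That t ω ≤ c} ∧
          ω ∈ {ω' | c * A.Nsamp (t + 1) ω ≤ A.sampleSum (t + 1) (A.Nsamp (t + 1) ω) ω'}} :=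
        measure_mono fun ω ⟨h1, h2⟩ => ⟨h1, A.mul_Nsamp_le_sampleSum_of_lt_That h2⟩
    _ ≤ A.vol {ω | A.That t ω ≤ c} * ENNReal.ofReal (α / 2 ^ (t + 3)) :=
        measure_mem_and_mem_le_of_indep (B := fun n => {ω | c * n ≤ A.sampleSum (t + 1) n ω})
          (A.pathsSigma_le _) (A.indep_pathsSigma hdisj) (A.measurable_Nsamp_succ ht hThat)
          (hThat measurableSet_Iic)
          (fun n => A.measurable_sampleSum (fun _ => rfl) n measurableSet_Ici) hbound
    _ ≤ ENNReal.ofReal (α / 2 ^ (t + 3)) := mul_le_of_le_one_left' prob_le_one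

theorem measure_exists_That_gt_le (hrec : C.PositiveRecurrent) (hε0 : 0 < ε) (hε1 : ε ≤ 1)
    (hα0 : 0 < α) (hα1 : α < 1) :
    A.vol {ω | ∃ t, 1 ≤ t ∧ (1 + ε) * C.ERet i i < A.That t ω} ≤ ENNReal.ofReal (α / 4) := by
  set c := (1 + ε) * C.ERet i i
  have hsub : {ω | ∃ t, 1 ≤ t ∧ c < A.That t ω} ⊆ {ω | c < A.That 1 ω} ∪
      ⋃ r, {ω | A.That (r + 1) ω ≤ c ∧ c < A.That (r + 1 + 1) ω} := by
    rintro ω ⟨t, ht, hω⟩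
    by_contra hgood
    simp only [mem_union, mem_ofPred_eq, mem_iUnion, not_or, not_exists, not_and, not_lt]
      at hgood
    have hall : ∀ s, 1 ≤ s → A.That s ω ≤ c := fun s hs => by
      induction s, hs using Nat.le_induction with
      | base => exact hgood.1
      | succ s hs ih =>
        obtain ⟨r, rfl⟩ := Nat.exists_eq_add_of_le' hs
        exact hgood.2 r ih
    exact (hall t ht).not_gt hω
  calc A.vol {ω | ∃ t, 1 ≤ t ∧ c < A.That t ω}
      ≤ A.vol {ω | c < A.That 1 ω} +
          ∑' r, A.vol {ω | A.That (r + 1) ω ≤ c ∧ c < A.That (r + 1 + 1) ω} :=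
        (measure_mono hsub).trans ((measure_union_le _ _).trans (add_le_add le_rfl
          (measure_iUnion_le _)))
    _ ≤ ENNReal.ofReal (α / 8) + ∑' r : ℕ, ENNReal.ofReal (α / 8 / 2 / 2 ^ r) :=
        add_le_add (A.measure_That_one_gt_le hrec hε0 hε1 hα0 hα1) <| ENNReal.tsum_le_tsum
          fun r => (A.measure_That_le_and_succ_gt_le hrec hε0 hε1 hα0 hα1 (by omega)).trans_eq
            (by congr 1; ring)
    _ = ENNReal.ofReal (α / 4) := by
        rw [← ENNReal.ofReal_tsum_of_nonneg (fun r => by positivity) (summable_geometric_two' _),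
          tsum_geometric_two', ← ENNReal.ofReal_add (by positivity) (by positivity)]
        congr 1; ring

end Algo

theorem statement9_general {S : Type*} [MeasurableSpace S] [MeasurableSingletonClass S] [Countable S]
    (C : Chain S) (hrec : C.PositiveRecurrent)
    (i : S) (Δ ε α : ℝ)
    (hε : ε ∈ Set.Ioo (0 : ℝ) 1) (hα : α ∈ Set.Ioo (0 : ℝ) 1)
    {Ω : Type*} [MeasurableSpace Ω] (A : Algo C i ε α Ω) :
    1 - α ≤ (A.vol {ω |
      (∀ t, 1 ≤ t → C.statPi i / (1 + ε) ≤ (A.That t ω)⁻¹) ∧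
      ((∃ t, 1 ≤ t ∧ (A.That t ω)⁻¹ < Δ / (1 + ε)) → C.statPi i < Δ) ∧
      (Δ ≤ C.statPi i → ∀ t, 1 ≤ t → A.stops Δ t ω →
        A.phat t ω * (A.That t ω)⁻¹ < ε * Δ)}).toReal := by
  obtain ⟨hε0, hε1⟩ := hε
  obtain ⟨hα0, hα1⟩ := hα
  have h1ε : 0 < 1 + ε := by linarith
  set G := {ω | ∀ t, 1 ≤ t → A.That t ω ≤ (1 + ε) * C.ERet i i}
  have hGc : A.vol.real Gᶜ ≤ α / 4 := by
    refine ENNReal.toReal_le_of_le_ofReal (by positivity) ?_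
    convert A.measure_exists_That_gt_le hrec hε0 hε1.le hα0 hα1 using 2
    ext ω
    simp [G]
  have hG : 1 - α ≤ A.vol.real G := by
    have := measureReal_union_le (μ := A.vol) G Gᶜ
    rw [union_compl_self, probReal_univ] at this
    linarith
  refine hG.trans (measureReal_mono fun ω hω => ?_)
  have hπ : ∀ t, 1 ≤ t → C.statPi i / (1 + ε) ≤ (A.That t ω)⁻¹ := fun t ht => by
    rw [Chain.statPi, div_eq_mul_inv, ← mul_inv, mul_comm]
    exact inv_anti₀ (by linarith [A.one_le_That hε0 hα0 hα1 ht ω]) (hω t ht)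
  refine ⟨hπ, fun ⟨t, ht, hlt⟩ => ?_, fun hΔ t ht hstop => hstop.resolve_left ?_⟩
  · exact (div_lt_div_iff_of_pos_right h1ε).1 ((hπ t ht).trans_lt hlt)
  · exact not_lt.2 ((div_le_div_of_nonneg_right hΔ h1ε.le).trans (hπ t ht))

/-- Theorem 1 of the paper. With probability at least `1 − α`, for every
iteration `t` the estimate satisfies `π̂_i^{(t)} ≥ π_i/(1+ε)`; consequently, on this event,
if the algorithm ever satisfies termination condition (a) (i.e. `π̂_i^{(t)} < Δ/(1+ε)`,
output `0`) then indeed `π_i < Δ`, and equivalently if `π_i ≥ Δ` then whenever the algorithm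
terminates it does so at condition (b) (output `1`). -/
theorem statement9 {S : Type*} [MeasurableSpace S] [MeasurableSingletonClass S] [Countable S]
    (C : Chain S) (hirr : C.Irreducible) (hrec : C.PositiveRecurrent)
    (i : S) (Δ ε α : ℝ) (hΔ : Δ ∈ Set.Ioo (0 : ℝ) 1)
    (hε : ε ∈ Set.Ioo (0 : ℝ) 1) (hα : α ∈ Set.Ioo (0 : ℝ) 1)
    {Ω : Type*} [MeasurableSpace Ω] (A : Algo C i ε α Ω) :
    1 - α ≤ (A.vol {ω |
      (∀ t, 1 ≤ t → C.statPi i / (1 + ε) ≤ (A.That t ω)⁻¹) ∧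
      ((∃ t, 1 ≤ t ∧ (A.That t ω)⁻¹ < Δ / (1 + ε)) → C.statPi i < Δ) ∧
      (Δ ≤ C.statPi i → ∀ t, 1 ≤ t → A.stops Δ t ω →
        A.phat t ω * (A.That t ω)⁻¹ < ε * Δ)}).toReal :=
  statement9_general C hrec i Δ ε α hε hα A

end

end LocalStationary
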